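/- The deviation probability over the initial times satisfies P( ∃ t ∈ {1, …, N} : μ̂_t − μ > z_t ) ≤ (δ/κ(N))^{(N+1)/N} · ∑_{t=1}^{N} (log₂(2t))^{−(N+1)/N}. -/

import Mathlib

open MeasureTheory ProbabilityTheory Set

/-- KL divergence between Bernoulli(p) and Bernoulli(q) (real-valued formula,
valid when `q ∈ (0,1)`; conventions `0·log 0 = 0` via Lean's `Real.log 0 = 0`, `x/0 = 0`). -/
noncomputable def klBerR (p q : ℝ) : ℝ :=
  p * Real.log (p / q) + (1 - p) * Real.log ((1 - p) / (1 - q))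

/-!
Union bound over `t ≤ N`. For each `t`, a variable in `[0,1]` with mean `μ` has a moment
generating function dominated by that of a Bernoulli(`μ`) variable (convexity of `exp`), so the
Chernoff bound gives `P(μ̂_t ≥ μ + z) ≤ exp (-t · kl(μ + z, μ))`. Since `kl(·, μ)` is convex and
vanishes at `μ`, `kl(μ + z_t, μ) ≥ (N+1)/N · kl(μ + N/(N+1) · z_t, μ) = (N+1)/N · f_t`, and
`exp (-t · (N+1)/N · f_t) = (δ/κ)^((N+1)/N) · (log₂ 2t)^(-(N+1)/N)`. When `z_t = 1 - μ` the event
is empty.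
-/

open Real

lemma klBerR_eq_neg_binEntropy (p : ℝ) {μ : ℝ} (hμ0 : μ ≠ 0) (hμ1 : μ ≠ 1) :
    klBerR p μ = -binEntropy p - p * log μ - (1 - p) * log (1 - μ) := by
  rcases eq_or_ne p 0 with rfl | hp0
  · simp [klBerR]
  rcases eq_or_ne p 1 with rfl | hp1
  · simp [klBerR]
  rw [klBerR, binEntropy, log_div hp0 hμ0, log_div (sub_ne_zero.2 hp1.symm)
    (sub_ne_zero.2 hμ1.symm), log_inv, log_inv]
  ring

lemma klBerR_self (μ : ℝ) : klBerR μ μ = 0 := by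
  rcases eq_or_ne μ 0 with rfl | hμ0
  · simp [klBerR]
  rcases eq_or_ne (1 - μ) 0 with h | hμ1
  · simp [klBerR, h]
  simp [klBerR, div_self hμ0, div_self hμ1]

lemma convexOn_klBerR {μ : ℝ} (hμ0 : μ ≠ 0) (hμ1 : μ ≠ 1) :
    ConvexOn ℝ (Icc 0 1) (fun p => klBerR p μ) := by
  refine ⟨convex_Icc 0 1, fun x hx y hy a b ha hb hab => ?_⟩
  have h := strictConcave_binEntropy.concaveOn.2 hx hy ha hb hab
  simp only [klBerR_eq_neg_binEntropy _ hμ0 hμ1, smul_eq_mul] at h ⊢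
  obtain rfl : b = 1 - a := by linarith
  nlinarith

lemma klBerR_add_mul_le {μ z c : ℝ} (hμ : μ ∈ Ioo 0 1) (hz0 : 0 ≤ z) (hz1 : μ + z ≤ 1)
    (hc0 : 0 ≤ c) (hc1 : c ≤ 1) : klBerR (μ + c * z) μ ≤ c * klBerR (μ + z) μ := by
  have h := (convexOn_klBerR hμ.1.ne' hμ.2.ne).2 (x := μ + z) (y := μ)
    ⟨by linarith [hμ.1], hz1⟩ ⟨hμ.1.le, hμ.2.le⟩ hc0 (sub_nonneg.2 hc1) (add_sub_cancel c 1)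
  simp only [smul_eq_mul, klBerR_self, mul_zero, add_zero] at h
  rwa [show c * (μ + z) + (1 - c) * μ = μ + c * z by ring] at h

lemma exp_mul_le_one_sub_add_mul_exp {x : ℝ} (hx : x ∈ Icc (0 : ℝ) 1) (s : ℝ) :
    exp (s * x) ≤ 1 - x + x * exp s := by
  have h := convexOn_exp.2 (mem_univ 0) (mem_univ s) (sub_nonneg.2 hx.2) hx.1 (sub_add_cancel 1 x)
  simp only [smul_eq_mul, mul_zero, zero_add, exp_zero, mul_one] at h
  rwa [mul_comm]

-- `log (a (1 - μ) / ((1 - a) μ))` is the optimal Chernoff parameter for a Bernoulli(`μ`) tail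
-- at `a`.
lemma exp_neg_mul_mul_one_sub_add_mul_exp {a μ : ℝ} (ha : a ∈ Ioo 0 1) (hμ : μ ∈ Ioo 0 1) :
    exp (-log (a * (1 - μ) / ((1 - a) * μ)) * a) *
      (1 - μ + μ * exp (log (a * (1 - μ) / ((1 - a) * μ)))) = exp (-klBerR a μ) := by
  obtain ⟨ha0, ha1⟩ := ha
  obtain ⟨hμ0, hμ1⟩ := hμ
  have h1a : 0 < 1 - a := by linarith
  have h1μ : 0 < 1 - μ := by linarith
  have hB : 1 - μ + μ * exp (log (a * (1 - μ) / ((1 - a) * μ))) =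
      exp (log ((1 - μ) / (1 - a))) := by
    rw [exp_log (by positivity), exp_log (by positivity)]
    field_simp
    ring
  rw [hB, ← exp_add, klBerR, log_div (by positivity) (by positivity), log_mul ha0.ne' h1μ.ne',
    log_mul h1a.ne' hμ0.ne', log_div h1μ.ne' h1a.ne', log_div ha0.ne' hμ0.ne',
    log_div h1a.ne' h1μ.ne']
  ring_nf

lemma sum_range_le_of_mem_Icc {Ω : Type*} {Y : ℕ → Ω → ℝ} (hbdd : ∀ i ω, Y i ω ∈ Icc 0 1)
    (t : ℕ) (ω : Ω) : ∑ j ∈ Finset.range t, Y j ω ≤ t := by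
  simpa using Finset.sum_le_sum fun j (_ : j ∈ Finset.range t) => (hbdd j ω).2

section Chernoff

variable {Ω : Type*} [MeasurableSpace Ω] {P : Measure Ω} [IsProbabilityMeasure P] {μ : ℝ}

lemma mgf_le_of_mem_Icc_zero_one {X : Ω → ℝ} (hX : Measurable X) (hbdd : ∀ ω, X ω ∈ Icc 0 1)
    (hmean : ∫ ω, X ω ∂P = μ) (s : ℝ) : mgf X P s ≤ 1 - μ + μ * exp s := by
  have hint : Integrable X P := .of_mem_Icc 0 1 hX.aemeasurable (ae_of_all _ hbdd)
  calc mgf X P s ≤ ∫ ω, (1 - X ω + X ω * exp s) ∂P :=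
        integral_mono (integrable_exp_mul_of_mem_Icc hX.aemeasurable (ae_of_all _ hbdd))
          (((integrable_const 1).sub hint).add (hint.mul_const _))
          fun ω => exp_mul_le_one_sub_add_mul_exp (hbdd ω) s
    _ = 1 - μ + μ * exp s := by
        rw [integral_add (f := fun ω => 1 - X ω) ((integrable_const 1).sub hint)
          (hint.mul_const _), integral_sub (integrable_const 1) hint, integral_mul_const, hmean]
        simp

variable {Y : ℕ → Ω → ℝ}

lemma mgf_sum_range_le (hmeas : ∀ i, Measurable (Y i)) (hindep : iIndepFun Y P)
    (hbdd : ∀ i ω, Y i ω ∈ Icc 0 1) (hmean : ∀ i, ∫ ω, Y i ω ∂P = μ) (t : ℕ) (s : ℝ) :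
    mgf (∑ j ∈ Finset.range t, Y j) P s ≤ (1 - μ + μ * exp s) ^ t := by
  rw [hindep.mgf_sum hmeas]
  calc ∏ j ∈ Finset.range t, mgf (Y j) P s ≤ ∏ _j ∈ Finset.range t, (1 - μ + μ * exp s) :=
        Finset.prod_le_prod (fun j _ => mgf_nonneg)
          fun j _ => mgf_le_of_mem_Icc_zero_one (hmeas j) (hbdd j) (hmean j) s
    _ = (1 - μ + μ * exp s) ^ t := by simp

lemma measureReal_mul_le_sum_range_le (hmeas : ∀ i, Measurable (Y i)) (hindep : iIndepFun Y P)
    (hbdd : ∀ i ω, Y i ω ∈ Icc 0 1) (hμ : μ ∈ Ioo 0 1) (hmean : ∀ i, ∫ ω, Y i ω ∂P = μ)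
    {a : ℝ} (ha : μ ≤ a) (ha1 : a < 1) (t : ℕ) :
    P.real {ω | t * a ≤ ∑ j ∈ Finset.range t, Y j ω} ≤ exp (-t * klBerR a μ) := by
  set s := log (a * (1 - μ) / ((1 - a) * μ))
  have ha0 : 0 < a := hμ.1.trans_le ha
  have hs0 : 0 ≤ s := log_nonneg <| by
    rw [le_div_iff₀ (mul_pos (by linarith) hμ.1)]
    nlinarith [hμ.2]
  have hint : Integrable (fun ω => exp (s * (∑ j ∈ Finset.range t, Y j) ω)) P :=
    hindep.integrable_exp_mul_sum hmeas fun i _ =>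
      integrable_exp_mul_of_mem_Icc (hmeas i).aemeasurable (ae_of_all _ (hbdd i))
  have hchernoff := measure_ge_le_exp_mul_mgf (t * a) hs0 hint
  simp only [Finset.sum_apply] at hchernoff
  calc P.real {ω | t * a ≤ ∑ j ∈ Finset.range t, Y j ω}
      ≤ exp (-s * (t * a)) * (1 - μ + μ * exp s) ^ t :=
        hchernoff.trans (mul_le_mul_of_nonneg_left
          (mgf_sum_range_le hmeas hindep hbdd hmean t s) (exp_pos _).le)
    _ = (exp (-s * a) * (1 - μ + μ * exp s)) ^ t := by
        rw [mul_pow, ← exp_nat_mul]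
        ring_nf
    _ = exp (-t * klBerR a μ) := by
        rw [exp_neg_mul_mul_one_sub_add_mul_exp ⟨ha0, ha1⟩ hμ, ← exp_nat_mul]
        ring_nf

lemma measure_sum_range_div_sub_gt_le (hmeas : ∀ i, Measurable (Y i)) (hindep : iIndepFun Y P)
    (hbdd : ∀ i ω, Y i ω ∈ Icc 0 1) (hμ : μ ∈ Ioo 0 1) (hmean : ∀ i, ∫ ω, Y i ω ∂P = μ)
    {t : ℕ} (ht : 0 < t) {z b : ℝ} (hz : 0 ≤ z) (hb : z < 1 - μ → b ≤ klBerR (μ + z) μ) :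
    P {ω | (∑ j ∈ Finset.range t, Y j ω) / t - μ > z} ≤ ENNReal.ofReal (exp (-t * b)) := by
  have htR : (0 : ℝ) < t := Nat.cast_pos.2 ht
  rcases lt_or_ge z (1 - μ) with hlt | hge
  · have hsub : {ω | (∑ j ∈ Finset.range t, Y j ω) / t - μ > z} ⊆
        {ω | t * (μ + z) ≤ ∑ j ∈ Finset.range t, Y j ω} := fun ω hω =>
      ((lt_div_iff₀' htR).1 (lt_sub_iff_add_lt'.1 hω)).le
    calc P {ω | (∑ j ∈ Finset.range t, Y j ω) / t - μ > z}
        ≤ P {ω | t * (μ + z) ≤ ∑ j ∈ Finset.range t, Y j ω} := measure_mono hsub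
      _ = ENNReal.ofReal (P.real {ω | t * (μ + z) ≤ ∑ j ∈ Finset.range t, Y j ω}) :=
        (ofReal_measureReal (measure_ne_top _ _)).symm
      _ ≤ ENNReal.ofReal (exp (-t * b)) := by
        refine ENNReal.ofReal_le_ofReal ((measureReal_mul_le_sum_range_le hmeas hindep hbdd hμ
          hmean (le_add_of_nonneg_right hz) (by linarith) t).trans (exp_le_exp.2 ?_))
        nlinarith [hb hlt]
  · have hempty : {ω | (∑ j ∈ Finset.range t, Y j ω) / t - μ > z} = ∅ :=
      eq_empty_of_forall_notMem fun ω (hω : z < _ - μ) => by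
        have := (div_le_one htR).2 (sum_range_le_of_mem_Icc hbdd t ω)
        linarith
    simp [hempty]

end Chernoff

lemma measure_exists_mem_Icc_le_ofReal_sum {Ω : Type*} [MeasurableSpace Ω] (P : Measure Ω)
    (E : ℕ → Set Ω) {m n : ℕ} {g : ℕ → ℝ} (hg : ∀ t ∈ Finset.Icc m n, 0 ≤ g t)
    (hE : ∀ t ∈ Finset.Icc m n, P (E t) ≤ ENNReal.ofReal (g t)) :
    P {ω | ∃ t, m ≤ t ∧ t ≤ n ∧ ω ∈ E t} ≤ ENNReal.ofReal (∑ t ∈ Finset.Icc m n, g t) := by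
  have hset : {ω | ∃ t, m ≤ t ∧ t ≤ n ∧ ω ∈ E t} = ⋃ t ∈ Finset.Icc m n, E t := by
    ext ω
    simp [and_assoc]
  rw [hset, ENNReal.ofReal_sum_of_nonneg hg]
  exact (measure_biUnion_finset_le _ _).trans (Finset.sum_le_sum hE)

-- The paper's `κ(N)`, with `N = 2 ^ l`.
noncomputable def lilKappa (δ : ℝ) (l N : ℕ) : ℝ :=
  δ ^ ((1:ℝ)/((N:ℝ)+1)) *
    ((if l ≠ 0 then
        ∑ t ∈ Finset.Icc 1 N, (Real.logb 2 (2*(t:ℝ))) ^ (-(((N:ℝ)+1)/(N:ℝ)))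
      else 0)
      + (N:ℝ) * ∑' k : ℕ, ((k:ℝ) + (l:ℝ) + 1) ^ (-(((N:ℝ)+1)/(N:ℝ))))
      ^ ((N:ℝ)/((N:ℝ)+1))

lemma one_le_logb_two_mul {t : ℕ} (ht : 1 ≤ t) : 1 ≤ logb 2 (2 * t) := by
  rw [le_logb_iff_rpow_le one_lt_two (by positivity), rpow_one]
  have : (1 : ℝ) ≤ t := Nat.one_le_cast.2 ht
  linarith

lemma lilKappa_pos {δ : ℝ} (hδ : 0 < δ) (l : ℕ) {N : ℕ} (hN : 1 ≤ N) : 0 < lilKappa δ l N := by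
  have hNR : (1 : ℝ) ≤ N := Nat.one_le_cast.2 hN
  have he : 1 < ((N : ℝ) + 1) / N := by rw [lt_div_iff₀ (by linarith)]; linarith
  have hsum : Summable fun k : ℕ => ((k : ℝ) + l + 1) ^ (-(((N : ℝ) + 1) / N)) := by
    have := (summable_nat_add_iff (l + 1)).2 (summable_nat_rpow.2 (neg_lt_neg he))
    simpa [add_assoc] using this
  have htsum := hsum.tsum_pos (fun k => by positivity) 0 (by positivity)
  have hfirst : 0 ≤ (if l ≠ 0 then
      ∑ t ∈ Finset.Icc 1 N, (logb 2 (2 * (t : ℝ))) ^ (-(((N : ℝ) + 1) / N)) else 0) := by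
    split_ifs
    · exact Finset.sum_nonneg fun t ht =>
        rpow_nonneg (zero_le_one.trans (one_le_logb_two_mul (Finset.mem_Icc.1 ht).1)) _
    · exact le_rfl
  unfold lilKappa
  have := mul_pos (zero_lt_one.trans_le hNR) htsum
  positivity

lemma exp_neg_mul_log_div_div {t κ w δ c : ℝ} (ht : 0 < t) (hκ : 0 < κ) (hw : 0 < w)
    (hδ : 0 < δ) :
    exp (-t * (log (κ * w / δ) / t / c)) = (δ / κ) ^ c⁻¹ * w ^ (-c⁻¹) := by
  rw [show -t * (log (κ * w / δ) / t / c) = log (κ / δ * w) * -c⁻¹ by field_simp,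
    ← rpow_def_of_pos (by positivity), mul_rpow (by positivity) hw.le, rpow_neg (by positivity),
    ← inv_rpow (by positivity), inv_div]

theorem lil_klucb_initial_block_deviation_general
    {Ω : Type*} [MeasurableSpace Ω] (P : Measure Ω) [IsProbabilityMeasure P]
    (Y : ℕ → Ω → ℝ) (hmeas : ∀ i, Measurable (Y i))
    (hindep : iIndepFun Y P)
    (hbdd : ∀ i ω, Y i ω ∈ Set.Icc (0:ℝ) 1)
    (μ : ℝ) (hμ : μ ∈ Set.Ioo (0:ℝ) 1)
    (hmean : ∀ i, ∫ ω, Y i ω ∂P = μ)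
    (δ : ℝ) (hδ : δ ∈ Set.Ioo (0:ℝ) 1)
    (l N : ℕ) (hN : N = 2 ^ l)
    (κ : ℝ)
    (hκ : κ = δ ^ ((1:ℝ)/((N:ℝ)+1)) *
      ((if l ≠ 0 then
          ∑ t ∈ Finset.Icc 1 N, (Real.logb 2 (2*(t:ℝ))) ^ (-(((N:ℝ)+1)/(N:ℝ)))
        else 0)
        + (N:ℝ) * ∑' k : ℕ, ((k:ℝ) + (l:ℝ) + 1) ^ (-(((N:ℝ)+1)/(N:ℝ))))
        ^ ((N:ℝ)/((N:ℝ)+1)))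
    (f : ℕ → ℝ)
    (hf : ∀ t : ℕ, f t = Real.log (κ * Real.logb 2 (2*(t:ℝ)) / δ) / (t:ℝ))
    (z : ℕ → ℝ)
    (hz : ∀ t : ℕ, 0 < t →
      z t ∈ Set.Ioc (0:ℝ) (1 - μ) ∧
      ((∃ y ∈ Set.Ioc (0:ℝ) (1 - μ),
          klBerR (μ + ((N:ℝ)/((N:ℝ)+1)) * y) μ = f t) →
        klBerR (μ + ((N:ℝ)/((N:ℝ)+1)) * z t) μ = f t) ∧
      ((¬ ∃ y ∈ Set.Ioc (0:ℝ) (1 - μ),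
          klBerR (μ + ((N:ℝ)/((N:ℝ)+1)) * y) μ = f t) →
        z t = 1 - μ)) :
    P {ω | ∃ t : ℕ, 1 ≤ t ∧ t ≤ N ∧
        (∑ j ∈ Finset.range t, Y j ω) / (t:ℝ) - μ > z t} ≤
      ENNReal.ofReal ((δ / κ) ^ (((N:ℝ)+1)/(N:ℝ)) *
        ∑ t ∈ Finset.Icc 1 N, (Real.logb 2 (2*(t:ℝ))) ^ (-(((N:ℝ)+1)/(N:ℝ)))) := by
  have hN1 : 1 ≤ N := hN ▸ Nat.one_le_two_pow
  have hκ0 : 0 < κ := hκ ▸ lilKappa_pos hδ.1 l hN1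
  have hc : (0 : ℝ) < N / (N + 1) := by positivity
  rw [Finset.mul_sum]
  refine measure_exists_mem_Icc_le_ofReal_sum P _ (fun t ht => ?_) fun t ht => ?_
  · exact mul_nonneg (rpow_nonneg (div_pos hδ.1 hκ0).le _) (rpow_nonneg (zero_le_one.trans
      (one_le_logb_two_mul (Finset.mem_Icc.1 ht).1)) _)
  obtain ⟨ht1, -⟩ := Finset.mem_Icc.1 ht
  obtain ⟨hzt, hsol, hnosol⟩ := hz t ht1
  have hw := one_le_logb_two_mul ht1
  calc P {ω | (∑ j ∈ Finset.range t, Y j ω) / (t:ℝ) - μ > z t}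
      ≤ ENNReal.ofReal (exp (-t * (f t / (N / (N + 1))))) := by
        refine measure_sum_range_div_sub_gt_le hmeas hindep hbdd hμ hmean ht1 hzt.1.le
          fun hlt => (div_le_iff₀' hc).2 ?_
        rw [← hsol (not_not.1 fun h => hlt.ne (hnosol h))]
        exact klBerR_add_mul_le hμ hzt.1.le (by linarith [hzt.2]) hc.le
          ((div_le_one (by positivity)).2 (by linarith))
    _ = _ := by
        rw [hf, exp_neg_mul_log_div_div (Nat.cast_pos.2 ht1) hκ0 (by linarith) hδ.1, inv_div]

/-- The deviation probability over the initial times satisfies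
`P(∃ t ∈ {1,…,N} : μ̂_t - μ > z_t) ≤ (δ/κ(N))^((N+1)/N) · ∑_{t=1}^N (log₂(2t))^{-(N+1)/N}`. -/
theorem lil_klucb_initial_block_deviation
    {Ω : Type*} [MeasurableSpace Ω] (P : Measure Ω) [IsProbabilityMeasure P]
    (Y : ℕ → Ω → ℝ) (hmeas : ∀ i, Measurable (Y i))
    (hindep : iIndepFun Y P)
    (hident : ∀ i, IdentDistrib (Y i) (Y 0) P P)
    (hbdd : ∀ i ω, Y i ω ∈ Set.Icc (0:ℝ) 1)
    (μ : ℝ) (hμ : μ ∈ Set.Ioo (0:ℝ) 1)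
    (hmean : ∀ i, ∫ ω, Y i ω ∂P = μ)
    (δ : ℝ) (hδ : δ ∈ Set.Ioo (0:ℝ) 1)
    (l N : ℕ) (hN : N = 2 ^ l)
    (κ : ℝ)
    (hκ : κ = δ ^ ((1:ℝ)/((N:ℝ)+1)) *
      ((if l ≠ 0 then
          ∑ t ∈ Finset.Icc 1 N, (Real.logb 2 (2*(t:ℝ))) ^ (-(((N:ℝ)+1)/(N:ℝ)))
        else 0)
        + (N:ℝ) * ∑' k : ℕ, ((k:ℝ) + (l:ℝ) + 1) ^ (-(((N:ℝ)+1)/(N:ℝ))))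
        ^ ((N:ℝ)/((N:ℝ)+1)))
    (f : ℕ → ℝ)
    (hf : ∀ t : ℕ, f t = Real.log (κ * Real.logb 2 (2*(t:ℝ)) / δ) / (t:ℝ))
    (z : ℕ → ℝ)
    (hz : ∀ t : ℕ, 0 < t →
      z t ∈ Set.Ioc (0:ℝ) (1 - μ) ∧
      ((∃ y ∈ Set.Ioc (0:ℝ) (1 - μ),
          klBerR (μ + ((N:ℝ)/((N:ℝ)+1)) * y) μ = f t) →
        klBerR (μ + ((N:ℝ)/((N:ℝ)+1)) * z t) μ = f t) ∧
      ((¬ ∃ y ∈ Set.Ioc (0:ℝ) (1 - μ),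
          klBerR (μ + ((N:ℝ)/((N:ℝ)+1)) * y) μ = f t) →
        z t = 1 - μ)) :
    P {ω | ∃ t : ℕ, 1 ≤ t ∧ t ≤ N ∧
        (∑ j ∈ Finset.range t, Y j ω) / (t:ℝ) - μ > z t} ≤
      ENNReal.ofReal ((δ / κ) ^ (((N:ℝ)+1)/(N:ℝ)) *
        ∑ t ∈ Finset.Icc 1 N, (Real.logb 2 (2*(t:ℝ))) ^ (-(((N:ℝ)+1)/(N:ℝ)))) :=
  lil_klucb_initial_block_deviation_general P Y hmeas hindep hbdd μ hμ hmean δ hδ l N hN κ hκ f hf z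
    hz
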